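/- arXiv:1407.5520 — 3 statements merged into one kernel-verified Lean document; each statement's English description precedes it below -/
import Mathlib

section
/- Let X be a real Hilbert space, let a < b be real numbers, let r ∈ ℕ, and let z ∈ X. Let L be an X-valued polynomial of degree at most r satisfying ∫_a^b ⟨L(t), V(t)⟩ dt = ⟨z, V(a)⟩ for every X-valued polynomial V of degree at most r. Then sup_{t ∈ [a,b]} ‖z − ∫_a^t L(τ) dτ‖ = ‖z‖. -/
/-!
Fix `c ∈ X`. The function `u(t) = ⟪z - ∫_a^t L, c⟫` is a real polynomial of degree at most
`r + 1`. Testing the identity defining `L` against `V = P • c` with `deg P ≤ r` and integrating by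
parts gives `∫_a^b u P' = u(b) P(b)`; with `P = 1` this says `u(b) = 0`, and then `u` is orthogonal
on `[a, b]` to every polynomial of degree `< r`. Hence `u` is a combination of the Legendre
polynomials of degrees `r` and `r + 1` shifted to `[a, b]`. These are bounded in absolute value on
`[a, b]` by their value at `b`, and take the values `±1` times it at `a`; the constraint `u(b) = 0`
then forces `|u(t)| ≤ |u(a)| = |⟪z, c⟫|`. Taking `c = z - ∫_a^t L` gives
`‖z - ∫_a^t L‖ ≤ ‖z‖`, with equality at `t = a`.
-/

open MeasureTheory Set
open scoped RealInnerProductSpace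

/-- `U : ℝ → X` is an `X`-valued polynomial of degree at most `r`. -/
def IsXPoly {X : Type*} [NormedAddCommGroup X] [NormedSpace ℝ X]
    (r : ℕ) (U : ℝ → X) : Prop :=
  ∃ c : ℕ → X, ∀ t : ℝ, U t = ∑ i ∈ Finset.range (r + 1), t ^ i • c i

namespace Polynomial

variable {R : Type*} [CommRing R]

theorem iterate_derivative_succ_mul_of_iterate_derivative_two_eq_zero {T : R[X]}
    (hT : derivative^[2] T = 0) (g : R[X]) (k : ℕ) :
    derivative^[k + 1] (T * g) =
      T * derivative^[k + 1] g + (k + 1) • (derivative T * derivative^[k] g) := by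
  simp only [Function.iterate_succ_apply', Function.iterate_zero_apply] at hT ⊢
  induction k with
  | zero => simp [derivative_mul, add_comm]
  | succ k ih =>
    simp only [Function.iterate_succ_apply'] at ih ⊢
    rw [ih]
    simp only [derivative_add, derivative_mul, derivative_smul, hT, zero_mul, zero_add]
    module

theorem iterate_derivative_succ_mul_derivative_of_iterate_derivative_three_eq_zero {S : R[X]}
    (hS : derivative^[3] S = 0) (g : R[X]) (k : ℕ) :
    derivative^[k + 1] (S * derivative g) =
      S * derivative^[k + 2] g + (k + 1) • (derivative S * derivative^[k + 1] g) +
        (k + 1).choose 2 • (derivative^[2] S * derivative^[k] g) := by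
  simp only [Function.iterate_succ_apply', Function.iterate_zero_apply] at hS ⊢
  induction k with
  | zero => simp [derivative_mul, add_comm]
  | succ k ih =>
    have hchoose : (k + 1 + 1).choose 2 = (k + 1).choose 2 + (k + 1) := by
      rw [Nat.choose_succ_succ' (k + 1) 1, Nat.choose_one_right, add_comm]
    simp only [Function.iterate_succ_apply'] at ih ⊢
    rw [ih, hchoose]
    simp only [derivative_add, derivative_mul, derivative_smul, hS, zero_mul, zero_add]
    module

theorem mul_derivative_pow (S : R[X]) (n : ℕ) :
    S * derivative (S ^ n) = n • (derivative S * S ^ n) := by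
  cases n with
  | zero => simp
  | succ n =>
    rw [derivative_pow, nsmul_eq_mul, pow_succ]
    simp only [Nat.add_sub_cancel, map_natCast]
    ring

theorem derivative_mul_derivative_iterate_derivative_pow {S : R[X]}
    (hS : derivative^[3] S = 0) (n : ℕ) :
    derivative (S * derivative (derivative^[n] (S ^ n))) =
      (n + 1).choose 2 • (derivative^[2] S * derivative^[n] (S ^ n)) := by
  have hS' : derivative^[2] (derivative S) = 0 := by
    rwa [← Function.iterate_succ_apply]
  have key := congrArg (derivative^[n + 1]) (mul_derivative_pow S n)
  rw [iterate_derivative_succ_mul_derivative_of_iterate_derivative_three_eq_zero hS,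
    iterate_derivative_smul,
    iterate_derivative_succ_mul_of_iterate_derivative_two_eq_zero hS'] at key
  have hchoose : ((n + 1).choose 2 : R[X]) * 2 = (n + 1) * n := by
    have h : (n + 1).choose 2 * 2 = (n + 1) * n := by
      simpa using (Nat.add_one_mul_choose_eq n 1).symm
    simpa using congrArg (Nat.cast : ℕ → R[X]) h
  simp only [derivative_mul, Function.iterate_succ_apply', Function.iterate_zero_apply,
    nsmul_eq_mul] at key ⊢
  push_cast at key ⊢
  linear_combination key - derivative (derivative S) * derivative^[n] (S ^ n) * hchoose

/-- `n! (b - a) ^ n` times the Legendre polynomial of degree `n` shifted to `[a, b]`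
(Rodrigues' formula). -/
noncomputable def rodrigues (a b : R) (n : ℕ) : R[X] :=
  derivative^[n] (((X - C a) * (X - C b)) ^ n)

theorem rodrigues_comm (a b : R) (n : ℕ) : rodrigues a b n = rodrigues b a n := by
  rw [rodrigues, rodrigues, mul_comm]

theorem eval_iterate_derivative_X_sub_C_mul_pow (a : R) (q : R[X]) {i n : ℕ} (hi : i < n) :
    (derivative^[i] (((X - C a) * q) ^ n)).eval a = 0 := by
  have hdvd := pow_sub_dvd_iterate_derivative_of_pow_dvd i
    (pow_dvd_pow_of_dvd (dvd_mul_right (X - C a) q) n)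
  exact dvd_iff_isRoot.mp ((dvd_pow_self _ (Nat.sub_ne_zero_of_lt hi)).trans hdvd)

theorem eval_right_rodrigues (a b : R) (n : ℕ) :
    (rodrigues a b n).eval b = n.factorial * (b - a) ^ n := by
  rw [rodrigues, mul_pow, iterate_derivative_mul, eval_finsetSum,
    Finset.sum_eq_single_of_mem n (Finset.self_mem_range_succ n)]
  · simp [iterate_derivative_X_sub_pow, Nat.descFactorial_self, mul_comm]
  · intro k hk hkn
    have hk' : k < n := by have := Finset.mem_range.mp hk; omega
    simp [iterate_derivative_X_sub_pow, zero_pow (Nat.sub_ne_zero_of_lt hk')]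

theorem eval_left_rodrigues (a b : R) (n : ℕ) :
    (rodrigues a b n).eval a = (-1) ^ n * (rodrigues a b n).eval b := by
  rw [rodrigues_comm, eval_right_rodrigues, ← rodrigues_comm, eval_right_rodrigues,
    show a - b = -(b - a) by ring, neg_pow]
  ring

theorem degree_rodrigues [CharZero R] (a b : R) (n : ℕ) : (rodrigues a b n).degree = n := by
  have hS : ((X - C a) * (X - C b)).Monic := (monic_X_sub_C a).mul (monic_X_sub_C b)
  have hdeg : (((X - C a) * (X - C b)) ^ n).natDegree = n + n := by
    rw [hS.natDegree_pow, (monic_X_sub_C a).natDegree_mul (monic_X_sub_C b)]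
    simp only [natDegree_X_sub_C]
    ring
  refine degree_eq_of_le_of_coeff_ne_zero ?_ ?_
  · refine degree_le_of_natDegree_le ((natDegree_iterate_derivative _ n).trans ?_)
    omega
  · rw [rodrigues, coeff_iterate_derivative, ← hdeg, (hS.pow n).coeff_natDegree, nsmul_one]
    exact Nat.cast_ne_zero.mpr (Nat.descFactorial_eq_zero_iff_lt.not.mpr (by omega))

theorem derivative_mul_derivative_rodrigues (a b : R) (n : ℕ) :
    derivative ((X - C a) * (X - C b) * derivative (rodrigues a b n)) =
      (n * (n + 1)) • rodrigues a b n := by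
  have hS2 : derivative^[2] ((X - C a) * (X - C b)) = 2 := by
    rw [Function.iterate_succ_apply', Function.iterate_one]
    simp only [derivative_mul, derivative_sub, derivative_X, derivative_C, sub_zero, one_mul,
      mul_one, derivative_add]
    exact one_add_one_eq_two
  have hS3 : derivative^[3] ((X - C a) * (X - C b)) = 0 := by
    rw [Function.iterate_succ_apply', hS2]; simp
  rw [rodrigues, derivative_mul_derivative_iterate_derivative_pow hS3, hS2, ← rodrigues]
  have h : (n + 1).choose 2 * 2 = n * (n + 1) := by
    simpa [mul_comm] using (Nat.add_one_mul_choose_eq n 1).symm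
  rw [← h, mul_smul, two_mul, two_smul]

theorem exists_derivative_eq_of_degree_lt {K : Type*} [Field K] [CharZero K]
    {Q : K[X]} {n : ℕ} (hQ : Q.degree < n) : ∃ P : K[X], derivative P = Q ∧ P.natDegree ≤ n := by
  refine ⟨∑ i ∈ Finset.range n, C (Q.coeff i / (i + 1)) * X ^ (i + 1), ?_, ?_⟩
  · ext m
    rw [degree_lt_iff_coeff_zero] at hQ
    simp only [coeff_derivative, finsetSum_coeff, coeff_C_mul_X_pow]
    rcases lt_or_ge m n with hm | hm
    · rw [Finset.sum_eq_single m (fun i _ hi => if_neg (by omega)) (by simp [hm]), if_pos rfl]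
      field_simp
    · rw [Finset.sum_eq_zero fun i hi => if_neg (by have := Finset.mem_range.mp hi; omega),
        hQ m hm, zero_mul]
  · refine natDegree_sum_le_of_forall_le _ _ fun i hi => (natDegree_C_mul_X_pow_le _ _).trans ?_
    have := Finset.mem_range.mp hi; omega

theorem degree_sub_C_mul_lt {K : Type*} [Field K] {p q : K[X]} {n : ℕ} (hp : p.degree ≤ n)
    (hq : q.degree = n) : (p - C (p.coeff n / q.leadingCoeff) * q).degree < n := by
  have hqn : q.natDegree = n := natDegree_eq_of_degree_eq_some hq
  have hq0 : q.leadingCoeff ≠ 0 := leadingCoeff_ne_zero.mpr (by rintro rfl; simp at hq)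
  rw [degree_lt_iff_coeff_zero]
  intro m hm
  rcases hm.eq_or_lt with rfl | hlt
  · rw [coeff_sub, coeff_C_mul, ← hqn, ← leadingCoeff, div_mul_cancel₀ _ hq0, hqn, sub_self]
  · rw [coeff_sub, coeff_C_mul, coeff_eq_zero_of_degree_lt (hp.trans_lt (by exact_mod_cast hlt)),
      coeff_eq_zero_of_degree_lt (hq.trans_lt (by exact_mod_cast hlt)), mul_zero, sub_zero]

section Real

open intervalIntegral

variable {a b : ℝ}

theorem integral_eval_mul_derivative (p q : ℝ[X]) :
    ∫ t in a..b, p.eval t * (derivative q).eval t =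
      p.eval b * q.eval b - p.eval a * q.eval a - ∫ t in a..b, (derivative p).eval t * q.eval t :=
  integral_mul_deriv_eq_deriv_mul (fun x _ => p.hasDerivAt x) (fun x _ => q.hasDerivAt x)
    (p.derivative.continuous.intervalIntegrable _ _)
    (q.derivative.continuous.intervalIntegrable _ _)

theorem integral_eval_mul_iterate_derivative_eq_zero {f : ℝ[X]} {n : ℕ}
    (ha : ∀ i < n, (derivative^[i] f).eval a = 0) (hb : ∀ i < n, (derivative^[i] f).eval b = 0)
    {Q : ℝ[X]} (hQ : Q.degree < n) :
    ∫ t in a..b, Q.eval t * (derivative^[n] f).eval t = 0 := by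
  induction n generalizing Q with
  | zero => simp [degree_eq_bot.mp (Nat.WithBot.lt_zero_iff.mp (by exact_mod_cast hQ))]
  | succ n ih =>
    have hQ' : (derivative Q).degree < n := by
      rw [degree_lt_iff_coeff_zero] at hQ ⊢
      intro m hm
      rw [coeff_derivative, hQ (m + 1) (by omega), zero_mul]
    rw [Function.iterate_succ_apply', integral_eval_mul_derivative, ha n n.lt_succ_self,
      hb n n.lt_succ_self, ih (fun i hi => ha i (by omega)) (fun i hi => hb i (by omega)) hQ']
    simp

theorem integral_eval_mul_rodrigues_eq_zero {Q : ℝ[X]} {n : ℕ} (hQ : Q.degree < n) :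
    ∫ t in a..b, Q.eval t * (rodrigues a b n).eval t = 0 :=
  integral_eval_mul_iterate_derivative_eq_zero
    (fun _ hi => eval_iterate_derivative_X_sub_C_mul_pow a _ hi)
    (fun _ hi => by rw [mul_comm]; exact eval_iterate_derivative_X_sub_C_mul_pow b _ hi) hQ

theorem eval_le_max_of_derivative_nonpos_of_nonneg (E : ℝ[X]) {m t : ℝ}
    (hneg : ∀ x ∈ Ioo a m, (derivative E).eval x ≤ 0)
    (hpos : ∀ x ∈ Ioo m b, 0 ≤ (derivative E).eval x) (ht : t ∈ Icc a b) :
    E.eval t ≤ max (E.eval a) (E.eval b) := by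
  rcases le_total t m with htm | htm
  · have hanti : AntitoneOn (fun x => E.eval x) (Icc a m) :=
      antitoneOn_of_deriv_nonpos (convex_Icc a m) E.continuous.continuousOn
        E.differentiable.differentiableOn fun x hx => by
          rw [interior_Icc] at hx; rw [Polynomial.deriv]; exact hneg x hx
    exact (hanti ⟨le_rfl, ht.1.trans htm⟩ ⟨ht.1, htm⟩ ht.1).trans (le_max_left _ _)
  · have hmono : MonotoneOn (fun x => E.eval x) (Icc m b) :=
      monotoneOn_of_deriv_nonneg (convex_Icc m b) E.continuous.continuousOn
        E.differentiable.differentiableOn fun x hx => by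
          rw [interior_Icc] at hx; rw [Polynomial.deriv]; exact hpos x hx
    exact (hmono ⟨htm, ht.2⟩ ⟨htm.trans ht.2, le_rfl⟩ ht.2).trans (le_max_right _ _)

theorem abs_eval_rodrigues_le_abs_eval_right (n : ℕ) {t : ℝ} (ht : t ∈ Icc a b) :
    |(rodrigues a b n).eval t| ≤ |(rodrigues a b n).eval b| := by
  rcases n.eq_zero_or_pos with rfl | hn
  · simp [rodrigues]
  set p := rodrigues a b n
  have hN : (0 : ℝ) < n * (n + 1) := by positivity
  -- the energy `n (n + 1) p² - (X - a) (X - b) p'²` decreases up to the midpoint, then increases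
  set E : ℝ[X] := (n * (n + 1) : ℝ[X]) * p ^ 2 - (X - C a) * (X - C b) * derivative p ^ 2
  have hE : derivative E = (2 * X - C (a + b)) * derivative p ^ 2 := by
    have hode := derivative_mul_derivative_rodrigues a b n
    simp only [derivative_mul, derivative_sub, derivative_X, derivative_C, sub_zero, one_mul,
      mul_one, nsmul_eq_mul] at hode
    simp only [E, derivative_sub, derivative_mul, derivative_sq, derivative_C, derivative_X,
      sub_zero, zero_mul, zero_add, mul_one, one_mul, C_add, derivative_natCast, derivative_add,
      derivative_one, add_zero, map_ofNat]
    push_cast at hode ⊢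
    linear_combination (-2 * derivative p) * hode
  have hEt := eval_le_max_of_derivative_nonpos_of_nonneg E (m := (a + b) / 2)
    (fun x hx => by
      rw [hE]; simp only [eval_mul, eval_sub, eval_pow, eval_X, eval_C, eval_ofNat]
      exact mul_nonpos_of_nonpos_of_nonneg (by linarith [hx.2]) (sq_nonneg _))
    (fun x hx => by
      rw [hE]; simp only [eval_mul, eval_sub, eval_pow, eval_X, eval_C, eval_ofNat]
      exact mul_nonneg (by linarith [hx.1]) (sq_nonneg _)) ht
  have hEa : E.eval a = n * (n + 1) * p.eval b ^ 2 := by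
    simp [E, p, eval_left_rodrigues, mul_pow, ← pow_mul, pow_mul']
  have hEb : E.eval b = n * (n + 1) * p.eval b ^ 2 := by simp [E]
  have hEt' : n * (n + 1) * p.eval t ^ 2 ≤ E.eval t := by
    have : (t - a) * (t - b) * (derivative p).eval t ^ 2 ≤ 0 :=
      mul_nonpos_of_nonpos_of_nonneg
        (mul_nonpos_of_nonneg_of_nonpos (by linarith [ht.1]) (by linarith [ht.2])) (sq_nonneg _)
    simp only [E, eval_sub, eval_mul, eval_pow, eval_C, eval_X, eval_natCast, eval_add, eval_one]
    linarith
  rw [hEa, hEb, max_self] at hEt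
  exact sq_le_sq.mp (le_of_mul_le_mul_left (hEt'.trans hEt) hN)

theorem eq_zero_of_integral_eval_mul_self_eq_zero (hab : a < b) {v : ℝ[X]}
    (h : ∫ t in a..b, v.eval t * v.eval t = 0) : v = 0 := by
  have hae := (integral_eq_zero_iff_of_le_of_nonneg_ae hab.le
    (Filter.Eventually.of_forall fun t => mul_self_nonneg (v.eval t))
    ((v.continuous.mul v.continuous).intervalIntegrable _ _)).mp h
  have hroot : EqOn (fun t => v.eval t * v.eval t) 0 (Ioo a b) :=
    Measure.eqOn_open_of_ae_eq (ae_restrict_of_ae_restrict_of_subset Ioo_subset_Ioc_self hae)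
      isOpen_Ioo (v.continuous.mul v.continuous).continuousOn continuousOn_const
  exact eq_zero_of_infinite_isRoot v
    ((Ioo_infinite hab).mono fun t ht => mul_self_eq_zero.mp (hroot ht))

theorem exists_eq_C_mul_rodrigues_add_C_mul_rodrigues (hab : a < b) {n : ℕ} {u : ℝ[X]}
    (hu : u.natDegree ≤ n + 1)
    (horth : ∀ Q : ℝ[X], Q.degree < n → ∫ t in a..b, Q.eval t * u.eval t = 0) :
    ∃ c₁ c₀ : ℝ, u = C c₁ * rodrigues a b (n + 1) + C c₀ * rodrigues a b n := by
  set P₁ := rodrigues a b (n + 1)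
  set P₀ := rodrigues a b n
  set c₁ := u.coeff (n + 1) / P₁.leadingCoeff
  set c₀ := (u - C c₁ * P₁).coeff n / P₀.leadingCoeff
  set v := u - C c₁ * P₁ - C c₀ * P₀ with hv_def
  have hv : v.degree < n := by
    have h₁ := degree_sub_C_mul_lt (degree_le_of_natDegree_le hu) (degree_rodrigues a b (n + 1))
    refine degree_sub_C_mul_lt ?_ (degree_rodrigues a b n)
    exact Order.le_of_lt_succ h₁
  have horth_v : ∀ Q : ℝ[X], Q.degree < n → ∫ t in a..b, Q.eval t * v.eval t = 0 := by
    intro Q hQ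
    have hint : ∀ p : ℝ[X], IntervalIntegrable (fun t => Q.eval t * p.eval t) volume a b :=
      fun p => (Q.continuous.mul p.continuous).intervalIntegrable _ _
    have hsplit : ∫ t in a..b, Q.eval t * v.eval t =
        (∫ t in a..b, Q.eval t * u.eval t) - c₁ * (∫ t in a..b, Q.eval t * P₁.eval t) -
          c₀ * ∫ t in a..b, Q.eval t * P₀.eval t := by
      rw [← intervalIntegral.integral_const_mul, ← intervalIntegral.integral_const_mul,
        ← integral_sub (hint u) ((hint P₁).const_mul c₁),
        ← integral_sub ((hint u).sub ((hint P₁).const_mul c₁)) ((hint P₀).const_mul c₀)]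
      congr 1 with t
      simp only [v, eval_sub, eval_mul, eval_C]
      ring
    rw [hsplit, horth Q hQ, integral_eval_mul_rodrigues_eq_zero hQ,
      integral_eval_mul_rodrigues_eq_zero (hQ.trans (by exact_mod_cast n.lt_succ_self))]
    ring
  have hv0 : v = 0 := eq_zero_of_integral_eval_mul_self_eq_zero hab (horth_v v hv)
  refine ⟨c₁, c₀, ?_⟩
  rw [hv_def] at hv0
  linear_combination hv0

theorem abs_eval_le_abs_eval_left_of_integral_eq_zero (hab : a < b) {r : ℕ} {u : ℝ[X]}
    (hu : u.natDegree ≤ r + 1) (hub : u.eval b = 0)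
    (horth : ∀ Q : ℝ[X], Q.degree < r → ∫ t in a..b, Q.eval t * u.eval t = 0)
    {t : ℝ} (ht : t ∈ Icc a b) : |u.eval t| ≤ |u.eval a| := by
  obtain ⟨c₁, c₀, rfl⟩ := exists_eq_C_mul_rodrigues_add_C_mul_rodrigues hab hu horth
  simp only [eval_add, eval_mul, eval_C, eval_left_rodrigues] at hub ⊢
  set β₁ := (rodrigues a b (r + 1)).eval b
  set β₀ := (rodrigues a b r).eval b
  have hβ : c₁ * β₁ = -(c₀ * β₀) := by linarith
  calc |c₁ * (rodrigues a b (r + 1)).eval t + c₀ * (rodrigues a b r).eval t|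
      ≤ |c₁| * |(rodrigues a b (r + 1)).eval t| + |c₀| * |(rodrigues a b r).eval t| := by
        rw [← abs_mul, ← abs_mul]; exact abs_add_le _ _
    _ ≤ |c₁| * |β₁| + |c₀| * |β₀| :=
        add_le_add
          (mul_le_mul_of_nonneg_left (abs_eval_rodrigues_le_abs_eval_right _ ht) (abs_nonneg _))
          (mul_le_mul_of_nonneg_left (abs_eval_rodrigues_le_abs_eval_right _ ht) (abs_nonneg _))
    _ = |(-1) ^ r * (2 * (c₀ * β₀))| := by
        rw [← abs_mul, ← abs_mul, hβ, abs_neg]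
        simp only [abs_mul, abs_pow, abs_neg, abs_one, one_pow, abs_two]
        ring
    _ = |c₁ * ((-1) ^ (r + 1) * β₁) + c₀ * ((-1) ^ r * β₀)| := by
        congr 1
        linear_combination (-1) ^ r * hβ

end Real

end Polynomial

open Polynomial

section

variable {E : Type*} [NormedAddCommGroup E] [NormedSpace ℝ E] {r : ℕ}

theorem IsXPoly.continuous {U : ℝ → E} (hU : IsXPoly r U) : Continuous U := by
  obtain ⟨x, hx⟩ := hU
  rw [funext hx]
  fun_prop

theorem isXPoly_eval_smul {P : ℝ[X]} (hP : P.natDegree ≤ r) (c : E) :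
    IsXPoly r fun t => P.eval t • c :=
  ⟨fun i => P.coeff i • c, fun t => by
    simp [eval_eq_sum_range' (Nat.lt_succ_of_le hP), Finset.sum_smul, smul_smul, mul_comm]⟩

end

section

variable {E : Type*} [NormedAddCommGroup E] [InnerProductSpace ℝ E] {r : ℕ}

theorem IsXPoly.exists_eval_eq_inner {U : ℝ → E} (hU : IsXPoly r U) (c : E) :
    ∃ ℓ : ℝ[X], ℓ.natDegree ≤ r ∧ ∀ t, ℓ.eval t = ⟪U t, c⟫ := by
  obtain ⟨x, hx⟩ := hU
  refine ⟨∑ i ∈ Finset.range (r + 1), C ⟪x i, c⟫ * X ^ i, ?_, fun t => ?_⟩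
  · refine natDegree_sum_le_of_forall_le _ _ fun i hi => (natDegree_C_mul_X_pow_le _ _).trans ?_
    have := Finset.mem_range.mp hi; omega
  · rw [hx, sum_inner, eval_finsetSum]
    refine Finset.sum_congr rfl fun i _ => ?_
    simp only [eval_mul, eval_C, eval_pow, eval_X, real_inner_smul_left]
    ring

theorem inner_intervalIntegral_left [CompleteSpace E] {f : ℝ → E} {a b : ℝ}
    (hf : IntervalIntegrable f volume a b) (c : E) :
    ⟪∫ t in a..b, f t, c⟫ = ∫ t in a..b, ⟪f t, c⟫ := by
  rw [real_inner_comm, ← innerSL_apply_apply ℝ, ← (innerSL ℝ c).intervalIntegral_comp_comm hf]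
  congr 1 with t
  exact real_inner_comm _ _

theorem norm_le_of_forall_abs_inner_le {x y : E} (h : ∀ c, |⟪x, c⟫| ≤ |⟪y, c⟫|) :
    ‖x‖ ≤ ‖y‖ := by
  have hsq : ‖x‖ * ‖x‖ ≤ ‖y‖ * ‖x‖ :=
    calc ‖x‖ * ‖x‖ = |⟪x, x⟫| := by rw [real_inner_self_eq_norm_mul_norm, abs_mul_self]
      _ ≤ |⟪y, x⟫| := h x
      _ ≤ ‖y‖ * ‖x‖ := abs_real_inner_le_norm y x
  rcases (norm_nonneg x).eq_or_lt with hx | hx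
  · rw [← hx]; exact norm_nonneg y
  · exact le_of_mul_le_mul_right hsq hx

variable [CompleteSpace E] {a b : ℝ} {z : E} {L : ℝ → E}

theorem exists_polynomial_eq_inner_sub_integral (hL : IsXPoly r L)
    (hLdef : ∀ V : ℝ → E, IsXPoly r V → ∫ t in a..b, ⟪L t, V t⟫ = ⟪z, V a⟫) (c : E) :
    ∃ u : ℝ[X], u.natDegree ≤ r + 1 ∧ u.eval b = 0 ∧
      (∀ Q : ℝ[X], Q.degree < r → ∫ t in a..b, Q.eval t * u.eval t = 0) ∧
      ∀ t, u.eval t = ⟪z - ∫ τ in a..t, L τ, c⟫ := by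
  obtain ⟨ℓ, hℓ_deg, hℓ⟩ := hL.exists_eval_eq_inner c
  obtain ⟨A, hA, hA_deg⟩ := exists_derivative_eq_of_degree_lt (n := r + 1)
    ((degree_le_of_natDegree_le hℓ_deg).trans_lt (by exact_mod_cast r.lt_succ_self))
  set u := C (⟪z, c⟫ + A.eval a) - A
  have hu : ∀ t, u.eval t = ⟪z - ∫ τ in a..t, L τ, c⟫ := by
    intro t
    have hFTC : ∫ τ in a..t, ℓ.eval τ = A.eval t - A.eval a := by
      rw [← hA]
      exact intervalIntegral.integral_eq_sub_of_hasDerivAt (fun x _ => A.hasDerivAt x)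
        (A.derivative.continuous.intervalIntegrable _ _)
    rw [inner_sub_left, inner_intervalIntegral_left (hL.continuous.intervalIntegrable _ _)]
    simp_rw [← hℓ]
    rw [hFTC]
    simp only [map_add, eval_sub, eval_add, eval_C, u]
    ring
  -- pairing `u` with `P'` by parts turns the defining identity of `L` into a boundary term
  have hpair : ∀ P : ℝ[X], P.natDegree ≤ r →
      ∫ t in a..b, u.eval t * (derivative P).eval t = u.eval b * P.eval b := by
    intro P hP
    have hV := hLdef _ (isXPoly_eval_smul hP c)
    simp only [real_inner_smul_right] at hV
    have hu' : ∫ t in a..b, (derivative u).eval t * P.eval t = -(P.eval a * ⟪z, c⟫) := by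
      rw [← hV, ← intervalIntegral.integral_neg]
      congr 1 with t
      simp only [u, map_add, derivative_sub, derivative_C, add_zero, hA, zero_sub, eval_neg, hℓ,
        neg_mul, neg_inj]
      ring
    rw [integral_eval_mul_derivative, hu', hu a]
    simp only [intervalIntegral.integral_same, sub_zero, sub_neg_eq_add]
    ring
  have hub : u.eval b = 0 := by simpa using (hpair 1 (by simp)).symm
  refine ⟨u, ?_, hub, fun Q hQ => ?_, hu⟩
  · exact (natDegree_sub_le _ _).trans (max_le (by simp) hA_deg)
  · obtain ⟨P, rfl, hP⟩ := exists_derivative_eq_of_degree_lt hQ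
    simp_rw [mul_comm (eval _ (derivative P))]
    rw [hpair P hP, hub, zero_mul]

end

/-- Lemma 3.1 (equation (auxSLC)): the sup over `[a,b]` of
`‖z − ∫_a^t L(τ) dτ‖`, where `L` is the lifting of `z`, equals `‖z‖`. -/
theorem lifting_sup_identity
    {X : Type*} [NormedAddCommGroup X] [InnerProductSpace ℝ X] [CompleteSpace X]
    (a b : ℝ) (hab : a < b) (r : ℕ) (z : X)
    (L : ℝ → X) (hL : IsXPoly r L)
    (hLdef : ∀ V : ℝ → X, IsXPoly r V →
      (∫ t in a..b, ⟪L t, V t⟫) = ⟪z, V a⟫) :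
    (⨆ t : Set.Icc a b, ‖z - ∫ τ in a..(t : ℝ), L τ‖) = ‖z‖ := by
  have hle : ∀ t ∈ Icc a b, ‖z - ∫ τ in a..t, L τ‖ ≤ ‖z‖ := fun t ht =>
    norm_le_of_forall_abs_inner_le fun c => by
      obtain ⟨u, hu, hub, horth, hu_eval⟩ := exists_polynomial_eq_inner_sub_integral hL hLdef c
      simpa [hu_eval] using abs_eval_le_abs_eval_left_of_integral_eq_zero hab hu hub horth ht
  have ha : a ∈ Icc a b := left_mem_Icc.mpr hab.le
  have : Nonempty (Icc a b) := ⟨⟨a, ha⟩⟩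
  refine le_antisymm (ciSup_le fun t => hle t t.2) (le_ciSup_of_le ?_ ⟨a, ha⟩ (by simp))
  exact ⟨‖z‖, by rintro _ ⟨t, rfl⟩; exact hle t t.2⟩
end

section
/- Let X be a real Hilbert space, let a < b be real numbers, and let r ∈ ℕ. Let U be an X-valued polynomial of degree at most r, and let L be an X-valued polynomial of degree at most r satisfying ∫_a^b ⟨L(t), V(t)⟩ dt = ⟨U(a), V(a)⟩ for every X-valued polynomial V of degree at most r. Then ‖U(a)‖ ≤ ∫_a^b ‖U'(t) + L(t)‖ dt. -/
open MeasureTheory Set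
open scoped RealInnerProductSpace

/-!
Test the identity defining `L` with `V(t) = φ(t) • U(a)`, where `φ` is the Legendre polynomial
of degree `r` on `[a, b]` normalised by `φ(a) = 1`. Since `t ↦ ⟪U'(t), U(a)⟫` is a polynomial of
degree `< r`, it is orthogonal to `φ`, so `∫ ⟪U' + L, V⟫ = ‖U(a)‖²`; and `|φ| ≤ 1` on `[a, b]`
bounds the left side by `‖U(a)‖ ∫ ‖U' + L‖`.

The bound `|φ| ≤ 1` comes from the Legendre equation `((t - a)(t - b) φ')' = r (r + 1) φ`:
the function `r (r + 1) φ² - (t - a)(t - b) φ'²` dominates `r (r + 1) φ²` on `[a, b]`, decreases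
up to the midpoint and increases after it, and takes the value `r (r + 1) φ(a)²` at both ends.
-/

open intervalIntegral

namespace Polynomial

variable {R : Type*} [CommRing R]

theorem eval_iterate_derivative_X_sub_C_pow_mul (c : R) (n : ℕ) (q : R[X]) :
    (derivative^[n] ((X - C c) ^ n * q)).eval c = n.factorial * q.eval c := by
  rw [iterate_derivative_mul, eval_finsetSum, Finset.sum_eq_single 0]
  · simp [iterate_derivative_X_sub_pow_self]
  · intro k hk hk0
    rw [iterate_derivative_X_sub_pow, Nat.sub_sub_self (by simpa [Nat.lt_succ_iff] using hk)]
    simp [zero_pow hk0]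
  · simp

theorem iterate_derivative_mul_derivative_of_derivative_eq_C {V : R[X]} {c : R}
    (hV : derivative V = C c) (G : R[X]) (m : ℕ) :
    derivative^[m] (V * derivative G) =
      V * derivative^[m + 1] G + C (m * c) * derivative^[m] G := by
  induction m with
  | zero => simp
  | succ m ih =>
    rw [Function.iterate_succ_apply', ih, Function.iterate_succ_apply' _ (m + 1),
      Function.iterate_succ_apply' _ m]
    simp only [derivative_add, derivative_mul, hV, derivative_C, zero_mul, zero_add]
    push_cast
    simp only [C_add, C_mul, C_1]
    ring

theorem iterate_derivative_mul_derivative_derivative_of_derivative_derivative_eq_C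
    {W : R[X]} {c : R} (hW : derivative (derivative W) = C (2 * c)) (G : R[X]) (m : ℕ) :
    derivative^[m] (W * derivative (derivative G)) =
      W * derivative^[m + 2] G + C (m : R) * derivative W * derivative^[m + 1] G
        + C (m * (m - 1) * c) * derivative^[m] G := by
  induction m with
  | zero => simp [Function.iterate_succ_apply']
  | succ m ih =>
    rw [Function.iterate_succ_apply', ih, Function.iterate_succ_apply' _ (m + 2),
      Function.iterate_succ_apply' _ (m + 1), Function.iterate_succ_apply' _ m]
    simp only [derivative_add, derivative_mul, hW, derivative_C, zero_mul, zero_add]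
    push_cast
    simp only [C_add, C_mul, C_sub, C_1, C_ofNat]
    ring

theorem integral_eval_derivative_mul_eq_neg {a b : ℝ} {f : ℝ[X]} (ha : f.eval a = 0)
    (hb : f.eval b = 0) (g : ℝ[X]) :
    ∫ t in a..b, (derivative f).eval t * g.eval t =
      -∫ t in a..b, f.eval t * (derivative g).eval t := by
  have hparts := integral_deriv_mul_eq_sub (a := a) (b := b) (fun t _ ↦ f.hasDerivAt t)
    (fun t _ ↦ g.hasDerivAt t) (f.derivative.continuous.intervalIntegrable a b)
    (g.derivative.continuous.intervalIntegrable a b)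
  rw [integral_add (Continuous.intervalIntegrable (by fun_prop) a b)
    (Continuous.intervalIntegrable (by fun_prop) a b), ha, hb] at hparts
  linarith

theorem integral_eval_iterate_derivative_mul {a b : ℝ} (k : ℕ) {f : ℝ[X]}
    (hf : ∀ j < k, (derivative^[j] f).eval a = 0 ∧ (derivative^[j] f).eval b = 0)
    (g : ℝ[X]) :
    ∫ t in a..b, (derivative^[k] f).eval t * g.eval t =
      (-1) ^ k * ∫ t in a..b, f.eval t * (derivative^[k] g).eval t := by
  induction k generalizing f with
  | zero => simp
  | succ k ih =>
    rw [Function.iterate_succ_apply, ih (fun j hj ↦ hf (j + 1) (by omega)),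
      integral_eval_derivative_mul_eq_neg (f := f) (hf 0 k.succ_pos).1 (hf 0 k.succ_pos).2,
      Function.iterate_succ_apply' _ k, pow_succ]
    ring

end Polynomial

open Polynomial

/-- Rodrigues' formula for the Legendre polynomial of degree `r` transported to `[a, b]`,
without normalisation. -/
noncomputable def intervalLegendre (a b : ℝ) (r : ℕ) : ℝ[X] :=
  derivative^[r] (((X - C a) * (X - C b)) ^ r)

theorem intervalLegendre_comm (a b : ℝ) (r : ℕ) :
    intervalLegendre a b r = intervalLegendre b a r := by
  rw [intervalLegendre, intervalLegendre, mul_comm]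

theorem natDegree_intervalLegendre_le (a b : ℝ) (r : ℕ) :
    (intervalLegendre a b r).natDegree ≤ r := by
  have hdeg : (((X - C a) * (X - C b)) ^ r).natDegree ≤ r * 2 :=
    natDegree_pow_le_of_le r <| natDegree_mul_le_of_le (natDegree_X_sub_C_le a)
      (natDegree_X_sub_C_le b)
  have := natDegree_iterate_derivative (((X - C a) * (X - C b)) ^ r) r
  rw [intervalLegendre]
  omega

theorem eval_intervalLegendre_left (a b : ℝ) (r : ℕ) :
    (intervalLegendre a b r).eval a = r.factorial * (a - b) ^ r := by
  rw [intervalLegendre, mul_pow, eval_iterate_derivative_X_sub_C_pow_mul]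
  simp

theorem eval_iterate_derivative_sub_mul_sub_pow_left (a b : ℝ) {r j : ℕ} (hj : j < r) :
    (derivative^[j] (((X - C a) * (X - C b)) ^ r)).eval a = 0 := by
  obtain ⟨q, hq⟩ := pow_sub_dvd_iterate_derivative_pow ((X - C a) * (X - C b)) r j
  simp [hq, zero_pow (Nat.sub_ne_zero_of_lt hj)]

theorem integral_intervalLegendre_mul_eq_zero (a b : ℝ) (r : ℕ) {S : ℝ[X]}
    (hS : derivative^[r] S = 0) :
    ∫ t in a..b, (intervalLegendre a b r).eval t * S.eval t = 0 := by
  have hvanish : ∀ j < r, (derivative^[j] (((X - C a) * (X - C b)) ^ r)).eval a = 0 ∧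
      (derivative^[j] (((X - C a) * (X - C b)) ^ r)).eval b = 0 := fun j hj ↦
    ⟨eval_iterate_derivative_sub_mul_sub_pow_left a b hj, by
      rw [mul_comm]; exact eval_iterate_derivative_sub_mul_sub_pow_left b a hj⟩
  rw [intervalLegendre, integral_eval_iterate_derivative_mul r hvanish, hS]
  simp

/-- The Legendre differential equation in Sturm–Liouville form. -/
theorem derivative_mul_derivative_intervalLegendre (a b : ℝ) (r : ℕ) :
    derivative ((X - C a) * (X - C b) * derivative (intervalLegendre a b r)) =
      C ((r : ℝ) * (r + 1)) * intervalLegendre a b r := by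
  set W : ℝ[X] := (X - C a) * (X - C b)
  set Q : ℝ[X] := W ^ r
  have hW : derivative (derivative W) = C 2 := by
    simp only [W, derivative_mul, derivative_X_sub_C, one_mul, mul_one, derivative_add]
    norm_num [C_ofNat]
  -- differentiate `W Q' = r W' Q` once, then `r` more times by the Leibniz rule
  have hQ1 : W * derivative Q = C (r : ℝ) * derivative W * Q := by
    cases r with
    | zero => simp [Q]
    | succ r => rw [derivative_pow_succ]; push_cast; ring
  have hQ2 : W * derivative (derivative Q) =
      C ((r : ℝ) - 1) * (derivative W * derivative Q) + C (2 * (r : ℝ)) * Q := by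
    have h := congrArg derivative hQ1
    simp only [derivative_mul, derivative_C, hW, zero_mul, zero_add] at h
    simp only [map_sub, map_mul, map_one, map_ofNat] at h ⊢
    linear_combination h
  have hr := congrArg (derivative^[r]) hQ2
  simp only [iterate_derivative_mul_derivative_derivative_of_derivative_derivative_eq_C
      (W := W) (c := 1) (by rw [hW, mul_one]),
    iterate_map_add, iterate_derivative_C_mul,
    iterate_derivative_mul_derivative_of_derivative_eq_C hW] at hr
  simp only [intervalLegendre, derivative_mul, ← Function.iterate_succ_apply' derivative]
  simp only [map_sub, map_mul, map_one, map_ofNat, map_add, map_natCast] at hr ⊢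
  linear_combination hr

theorem sq_eval_intervalLegendre_right (a b : ℝ) (r : ℕ) :
    (intervalLegendre a b r).eval b ^ 2 = (intervalLegendre a b r).eval a ^ 2 := by
  rw [intervalLegendre_comm a b, eval_intervalLegendre_left, ← intervalLegendre_comm,
    eval_intervalLegendre_left, mul_pow, mul_pow, ← pow_mul, ← pow_mul, mul_comm r, pow_mul,
    pow_mul, show (b - a) ^ 2 = (a - b) ^ 2 by ring]

theorem le_max_of_hasDerivAt_of_nonpos_of_nonneg {g g' : ℝ → ℝ} {a b m t : ℝ}
    (hg : ∀ x, HasDerivAt g (g' x) x) (hneg : ∀ x < m, g' x ≤ 0) (hpos : ∀ x, m < x → 0 ≤ g' x)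
    (ht : t ∈ Icc a b) :
    g t ≤ max (g a) (g b) := by
  have hdiff : Differentiable ℝ g := fun x ↦ (hg x).differentiableAt
  rcases le_total t m with htm | hmt
  · have hanti : AntitoneOn g (Iic m) :=
      antitoneOn_of_deriv_nonpos (convex_Iic m) hdiff.continuous.continuousOn
        hdiff.differentiableOn fun x hx ↦ by
          rw [(hg x).deriv]; exact hneg x (by simpa using hx)
    exact le_max_of_le_left (hanti (ht.1.trans htm) htm ht.1)
  · have hmono : MonotoneOn g (Ici m) :=
      monotoneOn_of_deriv_nonneg (convex_Ici m) hdiff.continuous.continuousOn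
        hdiff.differentiableOn fun x hx ↦ by
          rw [(hg x).deriv]; exact hpos x (by simpa using hx)
    exact le_max_of_le_right (hmono hmt (hmt.trans ht.2) ht.2)

theorem sq_eval_intervalLegendre_le {a b t : ℝ} (r : ℕ) (ht : t ∈ Icc a b) :
    (intervalLegendre a b r).eval t ^ 2 ≤ (intervalLegendre a b r).eval a ^ 2 := by
  rcases r.eq_zero_or_pos with rfl | hr
  · simp [intervalLegendre]
  set P := intervalLegendre a b r
  set lam : ℝ := r * (r + 1)
  have hlam : 0 < lam := by positivity
  have hode : ∀ x, (x - a) * (x - b) * (derivative (derivative P)).eval x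
      + (2 * x - a - b) * (derivative P).eval x = lam * P.eval x := fun x ↦ by
    have h := congrArg (eval x) (derivative_mul_derivative_intervalLegendre a b r)
    simp only [derivative_mul, derivative_X_sub_C, eval_add, eval_mul, eval_sub, eval_X,
      eval_C, eval_one] at h
    linear_combination h
  set g : ℝ → ℝ := fun x ↦ lam * P.eval x ^ 2 - (x - a) * (x - b) * (derivative P).eval x ^ 2
  have hg : ∀ x, HasDerivAt g ((2 * x - a - b) * (derivative P).eval x ^ 2) x := fun x ↦ by
    have h := ((P.hasDerivAt x).pow 2).const_mul lam |>.sub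
      ((((hasDerivAt_id x).sub_const a).mul ((hasDerivAt_id x).sub_const b)).mul
        ((P.derivative.hasDerivAt x).pow 2))
    refine h.congr_deriv ?_
    simp only [id, Pi.mul_apply, Pi.pow_apply]
    linear_combination (-2 * (derivative P).eval x) * hode x
  have hgt := le_max_of_hasDerivAt_of_nonpos_of_nonneg hg (m := (a + b) / 2)
    (fun x hx ↦ mul_nonpos_of_nonpos_of_nonneg (by linarith) (sq_nonneg _))
    (fun x hx ↦ mul_nonneg (by linarith) (sq_nonneg _)) ht
  have hga : g a = lam * P.eval a ^ 2 := by simp [g]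
  have hgb : g b = lam * P.eval a ^ 2 := by simp [g, P, sq_eval_intervalLegendre_right]
  have hgP : lam * P.eval t ^ 2 ≤ g t := by
    have : (t - a) * (t - b) ≤ 0 := mul_nonpos_of_nonneg_of_nonpos (by linarith [ht.1])
      (by linarith [ht.2])
    nlinarith [sq_nonneg ((derivative P).eval t)]
  rw [hga, hgb, max_self] at hgt
  exact le_of_mul_le_mul_left (hgP.trans hgt) hlam

theorem exists_orthogonal_eval_left_eq_one_abs_le_one {a b : ℝ} (hab : a ≠ b) (r : ℕ) :
    ∃ φ : ℝ[X], φ.natDegree ≤ r ∧ φ.eval a = 1 ∧ (∀ t ∈ Icc a b, |φ.eval t| ≤ 1) ∧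
      ∀ S : ℝ[X], derivative^[r] S = 0 → ∫ t in a..b, φ.eval t * S.eval t = 0 := by
  set P := intervalLegendre a b r
  have hPa : P.eval a ≠ 0 := by
    rw [eval_intervalLegendre_left]
    exact mul_ne_zero (by positivity) (pow_ne_zero _ (sub_ne_zero.2 hab))
  refine ⟨C (P.eval a)⁻¹ * P, ?_, ?_, fun t ht ↦ ?_, fun S hS ↦ ?_⟩
  · exact (natDegree_C_mul_le _ _).trans (natDegree_intervalLegendre_le a b r)
  · simp [hPa]
  · rw [eval_mul, eval_C, abs_mul, abs_inv, inv_mul_le_one₀ (abs_pos.2 hPa)]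
    exact sq_le_sq.1 (sq_eval_intervalLegendre_le r ht)
  · simp only [eval_mul, eval_C, mul_assoc]
    rw [intervalIntegral.integral_const_mul, integral_intervalLegendre_mul_eq_zero a b r hS,
      mul_zero]

section XPoly

variable {E : Type*}

theorem IsXPoly.contDiff [NormedAddCommGroup E] [NormedSpace ℝ E] {r : ℕ} {U : ℝ → E}
    (hU : IsXPoly r U) {n : WithTop ℕ∞} : ContDiff ℝ n U := by
  obtain ⟨c, hc⟩ := hU
  rw [funext hc]
  fun_prop

theorem isXPoly_eval_smul_s4 [NormedAddCommGroup E] [NormedSpace ℝ E] {r : ℕ} {p : ℝ[X]}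
    (hp : p.natDegree ≤ r) (w : E) : IsXPoly r fun t ↦ p.eval t • w :=
  ⟨fun i ↦ p.coeff i • w, fun t ↦ by
    dsimp only
    rw [eval_eq_sum_range' (Nat.lt_succ_of_le hp), Finset.sum_smul]
    simp [smul_smul, mul_comm]⟩

variable [NormedAddCommGroup E] [InnerProductSpace ℝ E]

theorem IsXPoly.exists_inner_eq_eval {r : ℕ} {U : ℝ → E} (hU : IsXPoly r U) (w : E) :
    ∃ q : ℝ[X], q.natDegree ≤ r ∧ ∀ t, ⟪U t, w⟫ = q.eval t := by
  obtain ⟨c, hc⟩ := hU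
  refine ⟨∑ i ∈ Finset.range (r + 1), C ⟪c i, w⟫ * X ^ i,
    natDegree_sum_le_of_forall_le _ _ fun i hi ↦ (natDegree_C_mul_X_pow_le _ _).trans
      (Nat.lt_succ_iff.1 (Finset.mem_range.1 hi)), fun t ↦ ?_⟩
  rw [hc, sum_inner, eval_finsetSum]
  refine Finset.sum_congr rfl fun i _ ↦ ?_
  rw [real_inner_smul_left, eval_mul, eval_C, eval_pow, eval_X, mul_comm]

theorem inner_deriv_eq_eval_derivative {U : ℝ → E} (hU : Differentiable ℝ U) {w : E}
    {q : ℝ[X]} (hq : ∀ t, ⟪U t, w⟫ = q.eval t) (t : ℝ) :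
    ⟪deriv U t, w⟫ = (derivative q).eval t := by
  have h := (hU t).hasDerivAt.inner ℝ (hasDerivAt_const t w)
  rw [funext hq, inner_zero_right, zero_add] at h
  exact h.unique (q.hasDerivAt t)

theorem IsXPoly.integral_inner_deriv_smul_eq_zero {r : ℕ} {U : ℝ → E} (hU : IsXPoly r U)
    {a b : ℝ} {φ : ℝ[X]}
    (hφ : ∀ S : ℝ[X], derivative^[r] S = 0 → ∫ t in a..b, φ.eval t * S.eval t = 0) (w : E) :
    ∫ t in a..b, ⟪deriv U t, φ.eval t • w⟫ = 0 := by
  obtain ⟨q, hqr, hq⟩ := hU.exists_inner_eq_eval w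
  have hUd : Differentiable ℝ U := (hU.contDiff (n := 1)).differentiable one_ne_zero
  simp_rw [real_inner_smul_right, inner_deriv_eq_eval_derivative hUd hq]
  refine hφ _ ?_
  rw [← Function.iterate_succ_apply]
  exact iterate_derivative_eq_zero (Nat.lt_succ_of_le hqr)

end XPoly

theorem initial_value_L1_bound_general
    {X : Type*} [NormedAddCommGroup X] [InnerProductSpace ℝ X]
    (a b : ℝ) (hab : a < b) (r : ℕ)
    (U L : ℝ → X) (hU : IsXPoly r U) (hL : IsXPoly r L)
    (hLdef : ∀ V : ℝ → X, IsXPoly r V →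
      (∫ t in a..b, ⟪L t, V t⟫) = ⟪U a, V a⟫) :
    ‖U a‖ ≤ ∫ t in a..b, ‖deriv U t + L t‖ := by
  obtain ⟨φ, hφr, hφa, hφle, hφorth⟩ := exists_orthogonal_eval_left_eq_one_abs_le_one hab.ne r
  have hU' : Continuous (deriv U) := hU.contDiff.continuous_deriv le_rfl
  have hLc : Continuous L := (hL.contDiff (n := 0)).continuous
  set V : ℝ → X := fun t ↦ φ.eval t • U a
  have htest : ∫ t in a..b, ⟪deriv U t + L t, V t⟫ = ‖U a‖ ^ 2 := by
    simp_rw [inner_add_left]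
    rw [integral_add (Continuous.intervalIntegrable (by fun_prop) a b)
      (Continuous.intervalIntegrable (by fun_prop) a b),
      hU.integral_inner_deriv_smul_eq_zero hφorth, hLdef V (isXPoly_eval_smul_s4 hφr _), zero_add,
      show V a = U a by simp [V, hφa], real_inner_self_eq_norm_sq]
  have hpointwise : ∀ t ∈ Icc a b, ⟪deriv U t + L t, V t⟫ ≤ ‖deriv U t + L t‖ * ‖U a‖ := by
    intro t ht
    have hV : ‖V t‖ ≤ ‖U a‖ := by
      rw [norm_smul, Real.norm_eq_abs]
      exact mul_le_of_le_one_left (norm_nonneg _) (hφle t ht)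
    exact (real_inner_le_norm _ _).trans (mul_le_mul_of_nonneg_left hV (norm_nonneg _))
  have hsq : ‖U a‖ ^ 2 ≤ (∫ t in a..b, ‖deriv U t + L t‖) * ‖U a‖ := by
    rw [← htest, ← intervalIntegral.integral_mul_const]
    exact integral_mono_on hab.le (Continuous.intervalIntegrable (by fun_prop) a b)
      (Continuous.intervalIntegrable (by fun_prop) a b) hpointwise
  have hnonneg : 0 ≤ ∫ t in a..b, ‖deriv U t + L t‖ :=
    integral_nonneg hab.le fun _ _ ↦ norm_nonneg _
  nlinarith [norm_nonneg (U a)]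

/-- Lemma 3.2 (equation (BN)): the initial value of a polynomial is controlled
by the `L¹` norm of its discrete dG time derivative `χ(U) = U' + L`. -/
theorem initial_value_L1_bound
    {X : Type*} [NormedAddCommGroup X] [InnerProductSpace ℝ X] [CompleteSpace X]
    (a b : ℝ) (hab : a < b) (r : ℕ)
    (U L : ℝ → X) (hU : IsXPoly r U) (hL : IsXPoly r L)
    (hLdef : ∀ V : ℝ → X, IsXPoly r V →
      (∫ t in a..b, ⟪L t, V t⟫) = ⟪U a, V a⟫) :
    ‖U a‖ ≤ ∫ t in a..b, ‖deriv U t + L t‖ :=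
  initial_value_L1_bound_general a b hab r U L hU hL hLdef
end

section
/- Let H be a real Hilbert space, H_m ⊆ H a finite-dimensional subspace, and π : H → H_m the orthogonal projection. Let F : [a, a+k] × H → H be continuous, with a real, k > 0, and fix u_prev ∈ H and r ∈ ℕ. Let U be an H_m-valued polynomial of degree at most r+1 with U(a) = π(u_prev), and let W be an H_m-valued polynomial of degree at most r satisfying ∫_a^{a+k} ⟨F(t, U(t)) − W(t), V(t)⟩ dt = 0 for every H_m-valued polynomial V of degree at most r. Then the following are equivalent: (i) ∫_a^{a+k} ⟨U'(t), V(t)⟩ dt = ∫_a^{a+k} ⟨F(t, U(t)), V(t)⟩ dt for every H_m-valued polynomial V of degree at most r; (ii) U(t) = π(u_prev) + ∫_a^t W(τ) dτ for all t ∈ [a, a+k]. -/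
open MeasureTheory Set
open scoped RealInnerProductSpace

/-- `U : ℝ → H` is an `H`-valued polynomial of degree at most `r`
with coefficients in the subspace `S`. -/
def IsHmPoly {H : Type*} [NormedAddCommGroup H] [InnerProductSpace ℝ H]
    (S : Submodule ℝ H) (r : ℕ) (U : ℝ → H) : Prop :=
  ∃ c : ℕ → H, (∀ i, c i ∈ S) ∧ ∀ t : ℝ, U t = ∑ i ∈ Finset.range (r + 1), t ^ i • c i

/-!
On one time step the weak equation tests `U' - F(·, U)` against the polynomials of degree `≤ r`;
since `W` is the projection of `F(·, U)` onto them, this amounts to testing `U' - W`. But `U' - W`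
is itself such a polynomial, so testing it against itself shows `U' = W` on `[a, a + k]`, which by
the fundamental theorem of calculus is the integral equation.
-/

lemma hasDerivAt_sum_pow_smul {E : Type*} [NormedAddCommGroup E] [NormedSpace ℝ E]
    (n : ℕ) (c : ℕ → E) (t : ℝ) :
    HasDerivAt (fun t : ℝ => ∑ i ∈ Finset.range (n + 1), t ^ i • c i)
      (∑ j ∈ Finset.range n, t ^ j • ((j + 1 : ℝ) • c (j + 1))) t := by
  convert HasDerivAt.fun_sum fun i (_ : i ∈ Finset.range (n + 1)) =>
    (hasDerivAt_pow i t).smul_const (c i) using 1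
  rw [Finset.sum_range_succ']
  simp only [Nat.cast_zero, zero_mul, zero_smul, add_zero, Nat.cast_add, Nat.cast_one,
    Nat.add_sub_cancel, smul_smul]
  exact Finset.sum_congr rfl fun j _ => by rw [mul_comm]

section

variable {E : Type*} [NormedAddCommGroup E] [InnerProductSpace ℝ E] {a b : ℝ}

lemma eqOn_zero_of_integral_inner_self_eq_zero {g : ℝ → E} (hab : a < b)
    (hg : ContinuousOn g (Icc a b)) (h : ∫ t in a..b, ⟪g t, g t⟫ = 0) :
    EqOn g 0 (Icc a b) := by
  have hint : IntervalIntegrable (fun t => ⟪g t, g t⟫) volume a b :=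
    (hg.inner hg).intervalIntegrable_of_Icc hab.le
  have hnonneg : 0 ≤ᵐ[volume.restrict (Ioc a b)] fun t => ⟪g t, g t⟫ :=
    Filter.Eventually.of_forall fun _ => real_inner_self_nonneg
  have hzero : g =ᵐ[volume.restrict (Icc a b)] 0 := by
    rw [← Measure.restrict_congr_set Ioc_ae_eq_Icc]
    filter_upwards [(intervalIntegral.integral_eq_zero_iff_of_le_of_nonneg_ae hab.le hnonneg
      hint).mp h] with t ht
    exact inner_self_eq_zero.mp ht
  exact Measure.eqOn_Icc_of_ae_eq volume hab.ne hzero hg continuousOn_const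

lemma forall_integral_inner_eq_iff_eqOn {P : (ℝ → E) → Prop} {f g : ℝ → E} (hab : a < b)
    (hf : ContinuousOn f (Icc a b)) (hg : ContinuousOn g (Icc a b))
    (hPsub : P fun t => f t - g t) :
    (∀ V, P V → ∫ t in a..b, ⟪f t, V t⟫ = ∫ t in a..b, ⟪g t, V t⟫) ↔
      EqOn f g (Icc a b) := by
  constructor
  · intro h
    have hfg : ContinuousOn (fun t => f t - g t) (Icc a b) := hf.sub hg
    have hself : ∫ t in a..b, ⟪f t - g t, f t - g t⟫ = 0 := by
      simp_rw [inner_sub_left]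
      rw [intervalIntegral.integral_sub ((hf.inner hfg).intervalIntegrable_of_Icc hab.le)
        ((hg.inner hfg).intervalIntegrable_of_Icc hab.le), h _ hPsub, sub_self]
    intro t ht
    exact sub_eq_zero.mp (eqOn_zero_of_integral_inner_self_eq_zero hab hfg hself ht)
  · intro h V _
    refine intervalIntegral.integral_congr fun t ht => ?_
    rw [uIcc_of_lt hab] at ht
    simp only [h ht]

variable [CompleteSpace E]

lemma eqOn_deriv_iff_eq_add_integral {U W : ℝ → E} (hab : a < b) (hU : ContDiff ℝ 1 U)
    (hW : Continuous W) :
    EqOn (deriv U) W (Icc a b) ↔ ∀ t ∈ Icc a b, U t = U a + ∫ τ in a..t, W τ := by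
  have hU' : Continuous (deriv U) := hU.continuous_deriv le_rfl
  constructor
  · intro h t ht
    have hsub : uIcc a t ⊆ Icc a b := by
      rw [uIcc_of_le ht.1]
      exact Icc_subset_Icc_right ht.2
    rw [← intervalIntegral.integral_congr (h.mono hsub), intervalIntegral.integral_deriv_eq_sub
      (fun x _ => (hU.differentiable one_ne_zero).differentiableAt) (hU'.intervalIntegrable _ _),
      add_sub_cancel]
  · intro h
    have hIoo : EqOn (deriv U) W (Ioo a b) := fun t ht => by
      have hprim : HasDerivAt (fun s => U a + ∫ τ in a..s, W τ) (W t) t :=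
        (intervalIntegral.integral_hasDerivAt_right (hW.intervalIntegrable a t)
          (hW.stronglyMeasurableAtFilter _ _) hW.continuousAt).const_add (U a)
      have hloc : U =ᶠ[nhds t] fun s => U a + ∫ τ in a..s, W τ := by
        filter_upwards [Ioo_mem_nhds ht.1 ht.2] with s hs
        exact h s (Ioo_subset_Icc_self hs)
      exact (hprim.congr_of_eventuallyEq hloc).deriv
    exact hIoo.of_subset_closure hU'.continuousOn hW.continuousOn Ioo_subset_Icc_self
      (closure_Ioo hab.ne).ge

end

namespace IsHmPoly

variable {H : Type*} [NormedAddCommGroup H] [InnerProductSpace ℝ H] {S : Submodule ℝ H}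
  {r : ℕ} {U V : ℝ → H}

lemma contDiff (h : IsHmPoly S r U) {n : WithTop ℕ∞} : ContDiff ℝ n U := by
  obtain ⟨c, -, hc⟩ := h
  rw [funext hc]
  fun_prop

lemma continuous (h : IsHmPoly S r U) : Continuous U :=
  (h.contDiff (n := 0)).continuous

lemma sub (hU : IsHmPoly S r U) (hV : IsHmPoly S r V) : IsHmPoly S r fun t => U t - V t := by
  obtain ⟨c, hc, hcU⟩ := hU
  obtain ⟨d, hd, hdV⟩ := hV
  exact ⟨fun i => c i - d i, fun i => sub_mem (hc i) (hd i), fun t => by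
    simp only [hcU, hdV, smul_sub, Finset.sum_sub_distrib]⟩

lemma deriv (h : IsHmPoly S (r + 1) U) : IsHmPoly S r (deriv U) := by
  obtain ⟨c, hc, hcU⟩ := h
  refine ⟨fun j => (j + 1 : ℝ) • c (j + 1), fun j => S.smul_mem _ (hc (j + 1)), fun t => ?_⟩
  rw [funext hcU]
  exact (hasDerivAt_sum_pow_smul (r + 1) c t).deriv

end IsHmPoly

/-- Section 3.1: equivalence of the weak continuous Galerkin formulation on one
time step with the strong integral (fixed-point) equation `U = T^cG(U)`. -/
theorem cG_weak_strong_equivalence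
    {H : Type*} [NormedAddCommGroup H] [InnerProductSpace ℝ H] [CompleteSpace H]
    (Hm : Submodule ℝ H) [FiniteDimensional ℝ Hm]
    (a k : ℝ) (hk : 0 < k) (u_prev : H) (r : ℕ)
    (F : ℝ → H → H)
    (hFcont : ContinuousOn (fun p : ℝ × H => F p.1 p.2)
      (Set.Icc a (a + k) ×ˢ Set.univ))
    (U : ℝ → H) (hU : IsHmPoly Hm (r + 1) U)
    (hUa : U a = (Submodule.orthogonalProjectionOnto Hm u_prev : H))
    (W : ℝ → H) (hW : IsHmPoly Hm r W)
    (hWdef : ∀ V : ℝ → H, IsHmPoly Hm r V →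
      (∫ t in a..(a + k), ⟪F t (U t) - W t, V t⟫) = 0) :
    (∀ V : ℝ → H, IsHmPoly Hm r V →
        (∫ t in a..(a + k), ⟪deriv U t, V t⟫) =
          ∫ t in a..(a + k), ⟪F t (U t), V t⟫) ↔
      (∀ t ∈ Set.Icc a (a + k),
        U t = (Submodule.orthogonalProjectionOnto Hm u_prev : H) + ∫ τ in a..t, W τ) := by
  have hak : a < a + k := lt_add_of_pos_right a hk
  have hFU : ContinuousOn (fun t => F t (U t)) (Icc a (a + k)) :=
    hFcont.comp (continuous_id.prodMk hU.continuous).continuousOn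
      fun t ht => ⟨ht, mem_univ _⟩
  have hFW : ∀ V, IsHmPoly Hm r V →
      ∫ t in a..(a + k), ⟪F t (U t), V t⟫ = ∫ t in a..(a + k), ⟪W t, V t⟫ := by
    intro V hV
    have hVc : ContinuousOn V (Icc a (a + k)) := hV.continuous.continuousOn
    rw [← sub_eq_zero, ← intervalIntegral.integral_sub
      ((hFU.inner hVc).intervalIntegrable_of_Icc hak.le)
      (hW.continuous.continuousOn.inner hVc |>.intervalIntegrable_of_Icc hak.le)]
    simpa only [inner_sub_left] using hWdef V hV
  rw [← hUa]
  calc _ ↔ ∀ V, IsHmPoly Hm r V →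
        ∫ t in a..(a + k), ⟪deriv U t, V t⟫ = ∫ t in a..(a + k), ⟪W t, V t⟫ :=
        forall₂_congr fun V hV => by rw [hFW V hV]
    _ ↔ EqOn (deriv U) W (Icc a (a + k)) :=
        forall_integral_inner_eq_iff_eqOn hak hU.deriv.continuous.continuousOn
          hW.continuous.continuousOn (hU.deriv.sub hW)
    _ ↔ _ := eqOn_deriv_iff_eq_add_integral hak hU.contDiff hW.continuous
end
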